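/- arXiv:2010.05285 — 2 statements merged into one kernel-verified Lean document; each statement's English description precedes it below -/
import Mathlib

section
/- Let p be a prime, and let S be a symmetric subset of ℤ_p = ℤ/pℤ with 0 ∉ S, such that the Cayley graph X = Cay(ℤ_p;S) is connected and edge-transitive. Then for every unit k ∈ ℤ_p^×, either kS = S or kS ∩ S = ∅, where kS = {ks : s ∈ S}. (In other words, S is a block of imprimitivity for the regular action of the multiplicative group ℤ_p^× on itself.) -/
/-- The Cayley graph of an abelian group `G` with connection set `S`.
When `S` is symmetric and `0 ∉ S`, distinct `g, h` are adjacent iff `g - h ∈ S`. -/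
def cayleyGraph {G : Type*} [AddCommGroup G] (S : Set G) : SimpleGraph G where
  Adj g h := g ≠ h ∧ g - h ∈ S ∧ h - g ∈ S
  symm := ⟨by rintro g h ⟨hne, h1, h2⟩; exact ⟨hne.symm, h2, h1⟩⟩
  loopless := ⟨by rintro g ⟨hne, -, -⟩; exact hne rfl⟩

/-- The canonical bipartite double cover of a simple graph. -/
def doubleCover {V : Type*} (X : SimpleGraph V) : SimpleGraph (V × ZMod 2) where
  Adj a b := X.Adj a.1 b.1 ∧ a.2 ≠ b.2
  symm := ⟨by rintro a b ⟨h1, h2⟩; exact ⟨h1.symm, h2.symm⟩⟩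
  loopless := ⟨by rintro a ⟨-, h2⟩; exact h2 rfl⟩

/-- The direct (tensor/categorical) product of simple graphs. -/
def directProd {V W : Type*} (X : SimpleGraph V) (Y : SimpleGraph W) :
    SimpleGraph (V × W) where
  Adj a b := X.Adj a.1 b.1 ∧ Y.Adj a.2 b.2
  symm := ⟨by rintro a b ⟨h1, h2⟩; exact ⟨h1.symm, h2.symm⟩⟩
  loopless := ⟨by rintro a ⟨h1, -⟩; exact X.loopless.irrefl _ h1⟩

/-!
For a primitive additive character `ψ` of `ℤ/p`, the functions `x ↦ ψ (a x)` are eigenvectors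
of the adjacency matrix `A` of `Cay(ℤ/p; S)`, with eigenvalues `λ a = ∑_{u ∈ S} ψ (a u)`;
hence `p · q(A) x 0 = ∑_a q(λ a) ψ (a x)` for every polynomial `q`. If `s` and `ks` both lie
in `S`, edge-transitivity gives an automorphism `φ` fixing `0` with `φ s = ks`, and `φ`
preserves every `q(A)`. Taking for `q(A)` the spectral projection onto the eigenvalue `λ 1`
shows that `F x = ∑_{a ∈ H} ψ (a x)`, with `H = {a | λ a = λ 1}`, satisfies `F (ks) = F s`.
The only `ℚ`-linear relation among `1, ζ, …, ζ^(p-1)` is `1 + ζ + ⋯ + ζ^(p-1) = 0`, so this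
forces `ks H = s H`, i.e. `k ∈ H`; and `λ k = λ 1` in turn forces `kS = S` in the same way.
-/

open Polynomial Finset Matrix

theorem Polynomial.coeff_sum_C_mul_X_pow_val {n : ℕ} [NeZero n] {R : Type*} [Semiring R]
    (v : ZMod n → R) (y : ZMod n) : (∑ x : ZMod n, C (v x) * X ^ x.val).coeff y.val = v y := by
  rw [finsetSum_coeff, sum_eq_single y]
  · simp
  · intro x _ hxy
    rw [coeff_C_mul_X_pow, if_neg fun h => hxy (ZMod.val_injective n h.symm)]
  · simp

namespace IsPrimitiveRoot

variable {K : Type*} [Field K] [CharZero K] {p : ℕ} [hp : Fact p.Prime] {ζ : K}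

theorem eq_of_sum_smul_pow_val_eq_zero (hζ : IsPrimitiveRoot ζ p) {v : ZMod p → ℚ}
    (hv : ∑ x, v x • ζ ^ x.val = 0) (x y : ZMod p) : v x = v y := by
  set g : ℚ[X] := ∑ x : ZMod p, C (v x) * X ^ x.val
  have hg : aeval ζ g = 0 := by simpa [g, Algebra.smul_def] using hv
  have hdvd : cyclotomic p ℚ ∣ g :=
    cyclotomic_eq_minpoly_rat hζ hp.out.pos ▸ minpoly.dvd ℚ ζ hg
  have hdeg : g.natDegree ≤ (cyclotomic p ℚ).natDegree := by
    rw [natDegree_cyclotomic, Nat.totient_prime hp.out]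
    refine natDegree_sum_le_of_forall_le _ _ fun x _ => (natDegree_C_mul_X_pow_le _ _).trans ?_
    have := ZMod.val_lt x
    omega
  set c := g.leadingCoeff
  have hgc : g = C c * cyclotomic p ℚ :=
    eq_leadingCoeff_mul_of_monic_of_dvd_of_natDegree_le (cyclotomic.monic p ℚ) hdvd hdeg
  have hcoeff (x : ZMod p) : v x = c := by
    rw [← coeff_sum_C_mul_X_pow_val v x]
    change g.coeff x.val = c
    rw [hgc, coeff_C_mul, cyclotomic_prime, finsetSum_coeff]
    simp [coeff_X_pow, ZMod.val_lt x]
  rw [hcoeff x, hcoeff y]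

theorem finset_eq_of_sum_pow_val_eq (hζ : IsPrimitiveRoot ζ p) {A B : Finset (ZMod p)}
    (h0 : (0 : ZMod p) ∈ A ↔ 0 ∈ B) (h : ∑ x ∈ A, ζ ^ x.val = ∑ x ∈ B, ζ ^ x.val) :
    A = B := by
  classical
  set v : ZMod p → ℚ := fun x => (if x ∈ A then 1 else 0) - (if x ∈ B then 1 else 0)
  have hv : ∑ x, v x • ζ ^ x.val = 0 := by
    simp [v, sub_smul, sum_sub_distrib, ite_smul, sum_ite_mem, h]
  have hv0 : v 0 = 0 := by simp [v, h0]
  ext x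
  have := hζ.eq_of_sum_smul_pow_val_eq_zero hv x 0
  by_cases hA : x ∈ A <;> by_cases hB : x ∈ B <;> simp_all [v]

theorem image_mul_left_eq_of_sum_eq (hζ : IsPrimitiveRoot ζ p) {A B : Finset (ZMod p)}
    {c d : ZMod p} (hc : c ≠ 0) (hd : d ≠ 0) (h0 : (0 : ZMod p) ∈ A ↔ 0 ∈ B)
    (h : ∑ a ∈ A, ζ ^ (c * a).val = ∑ b ∈ B, ζ ^ (d * b).val) :
    A.image (c * ·) = B.image (d * ·) := by
  refine hζ.finset_eq_of_sum_pow_val_eq ?_ ?_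
  · simpa [hc, hd] using h0
  · rwa [sum_image fun _ _ _ _ => (mul_right_inj' hc).1,
      sum_image fun _ _ _ _ => (mul_right_inj' hd).1]

end IsPrimitiveRoot

theorem Matrix.aeval_mulVec_of_mulVec_eq_smul {n R : Type*} [Fintype n] [DecidableEq n]
    [CommRing R] {M : Matrix n n R} {v : n → R} {μ : R} (h : M *ᵥ v = μ • v) (q : R[X]) :
    aeval M q *ᵥ v = q.eval μ • v := by
  have := Module.End.aeval_apply_of_mem_apply_eq_smul (f := toLinAlgEquiv' M) (p := q)
    (by simpa using h)
  rwa [aeval_algHom_apply, toLinAlgEquiv'_apply] at this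

namespace SimpleGraph

variable {V : Type*}

def IsEdgeTransitive (X : SimpleGraph V) : Prop :=
  ∀ e ∈ X.edgeSet, ∀ f ∈ X.edgeSet, ∃ φ : X ≃g X, Sym2.map (⇑φ) e = f

theorem Iso.aeval_adjMatrix_apply {R : Type*} [Fintype V] [DecidableEq V] [CommSemiring R]
    {X : SimpleGraph V} [DecidableRel X.Adj] (φ : X ≃g X) (q : R[X]) (x y : V) :
    aeval (X.adjMatrix R) q (φ x) (φ y) = aeval (X.adjMatrix R) q x y := by
  have h := aeval_algHom_apply (reindexAlgEquiv R R (φ : V ≃ V)) (X.adjMatrix R) q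
  rw [coe_reindexAlgEquiv, φ.reindex_adjMatrix (α := R)] at h
  simpa using congrArg (· (φ x) (φ y)) h

end SimpleGraph

section Cayley

variable {G : Type*} [AddCommGroup G] {S : Set G}

theorem cayleyGraph_adj_iff (hSsym : ∀ s ∈ S, -s ∈ S) (hS0 : (0 : G) ∉ S) {x y : G} :
    (cayleyGraph S).Adj x y ↔ y - x ∈ S := by
  refine ⟨fun h => h.2.2, fun h => ⟨?_, by simpa using hSsym _ h, h⟩⟩
  rintro rfl
  exact hS0 (by simpa using h)

def cayleyGraphSubLeftIso (S : Set G) (c : G) : cayleyGraph S ≃g cayleyGraph S where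
  toEquiv := Equiv.subLeft c
  map_rel_iff' {a b} := by
    simp only [cayleyGraph, Equiv.subLeft_apply, sub_sub_sub_cancel_left, ne_eq, sub_right_inj]
    tauto

theorem cayleyGraph_exists_iso_map_zero_map_eq (hSsym : ∀ s ∈ S, -s ∈ S) (hS0 : (0 : G) ∉ S)
    (hedge : (cayleyGraph S).IsEdgeTransitive) {s t : G} (hs : s ∈ S) (ht : t ∈ S) :
    ∃ φ : cayleyGraph S ≃g cayleyGraph S, φ 0 = 0 ∧ φ s = t := by
  have hadj {u : G} (hu : u ∈ S) : s(0, u) ∈ (cayleyGraph S).edgeSet := by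
    simpa [cayleyGraph_adj_iff hSsym hS0] using hu
  obtain ⟨φ, hφ⟩ := hedge _ (hadj hs) _ (hadj ht)
  rcases Sym2.eq_iff.1 (Sym2.map_mk _ _ _ ▸ hφ) with ⟨h0, hs⟩ | ⟨h0, hs⟩
  · exact ⟨φ, h0, hs⟩
  · exact ⟨φ.trans (cayleyGraphSubLeftIso S t), by simp [cayleyGraphSubLeftIso, h0],
      by simp [cayleyGraphSubLeftIso, hs]⟩

theorem adjMatrix_cayleyGraph_mulVec_addChar {K : Type*} [CommRing K] [Fintype G]
    [DecidableEq G] [DecidableRel (cayleyGraph S).Adj] [DecidablePred (· ∈ S)]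
    (hSsym : ∀ s ∈ S, -s ∈ S) (hS0 : (0 : G) ∉ S) (ψ : AddChar G K) :
    (cayleyGraph S).adjMatrix K *ᵥ ⇑ψ = (∑ u ∈ S.toFinset, ψ u) • ⇑ψ := by
  ext x
  calc ∑ y, (cayleyGraph S).adjMatrix K x y * ψ y
      = ∑ y, if y - x ∈ S then ψ y else 0 := by
        simp [SimpleGraph.adjMatrix_apply, cayleyGraph_adj_iff hSsym hS0, ite_mul]
    _ = ∑ u, if u ∈ S then ψ (x + u) else 0 :=
        Fintype.sum_equiv (Equiv.subRight x) _ _ fun y => by simp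
    _ = (∑ u ∈ S.toFinset, ψ u) * ψ x := by
        simp only [AddChar.map_add_eq_mul, mul_sum, ← sum_filter,
          Set.filter_mem_univ_eq_toFinset, mul_comm]

end Cayley

section Spectral

variable {R K : Type*} [CommRing R] [Fintype R] [DecidableEq R] [Field K] [CharZero K]

def cayleyEigenvalue (ψ : AddChar R K) (S : Set R) [DecidablePred (· ∈ S)] (a : R) : K :=
  ∑ u ∈ S.toFinset, ψ (a * u)

variable {S : Set R} [DecidableRel (cayleyGraph S).Adj] [DecidablePred (· ∈ S)]
  {ψ : AddChar R K}

theorem card_mul_aeval_adjMatrix_cayleyGraph_apply_zero (hSsym : ∀ s ∈ S, -s ∈ S)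
    (hS0 : (0 : R) ∉ S) (hψ : ψ.IsPrimitive) (q : K[X]) (x : R) :
    Fintype.card R * aeval ((cayleyGraph S).adjMatrix K) q x 0 =
      ∑ a, q.eval (cayleyEigenvalue ψ S a) * ψ (a * x) := by
  have hδ : (Fintype.card R : K) • Pi.single 0 1 = ∑ a, ⇑(ψ.mulShift a) := by
    ext x
    simp [AddChar.sum_mulShift x hψ, Pi.single_apply]
  have heig (a : R) : (cayleyGraph S).adjMatrix K *ᵥ ⇑(ψ.mulShift a) =
      cayleyEigenvalue ψ S a • ⇑(ψ.mulShift a) :=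
    adjMatrix_cayleyGraph_mulVec_addChar hSsym hS0 _
  calc (Fintype.card R : K) * aeval ((cayleyGraph S).adjMatrix K) q x 0
      = (aeval ((cayleyGraph S).adjMatrix K) q *ᵥ
          ((Fintype.card R : K) • Pi.single 0 1)) x := by
        simp [mulVec_smul]
    _ = _ := by
        simp [hδ, mulVec_sum, aeval_mulVec_of_mulVec_eq_smul (heig _)]

theorem sum_cayleyEigenvalue_fiber_apply_iso_eq [DecidableEq K] (hSsym : ∀ s ∈ S, -s ∈ S)
    (hS0 : (0 : R) ∉ S) (hψ : ψ.IsPrimitive) {φ : cayleyGraph S ≃g cayleyGraph S}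
    (hφ : φ 0 = 0) (b x : R) :
    ∑ a with cayleyEigenvalue ψ S a = cayleyEigenvalue ψ S b, ψ (φ x * a) =
      ∑ a with cayleyEigenvalue ψ S a = cayleyEigenvalue ψ S b, ψ (x * a) := by
  -- `aeval A q` is the spectral projection of the adjacency matrix `A` onto its eigenvalue `λ b`.
  set q := Lagrange.basis (univ.image (cayleyEigenvalue ψ S)) id (cayleyEigenvalue ψ S b)
  have hq (a : R) : q.eval (cayleyEigenvalue ψ S a) =
      if cayleyEigenvalue ψ S a = cayleyEigenvalue ψ S b then 1 else 0 := by
    split_ifs with h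
    · rw [h]
      exact Lagrange.eval_basis_self (v := id) (Set.injOn_id _) (mem_image_of_mem _ (mem_univ b))
    · exact Lagrange.eval_basis_of_ne (v := id) (Ne.symm h) (mem_image_of_mem _ (mem_univ a))
  have h := congrArg ((Fintype.card R : K) * ·) (φ.aeval_adjMatrix_apply q x 0)
  simp only [hφ, card_mul_aeval_adjMatrix_cayleyGraph_apply_zero hSsym hS0 hψ, hq, ite_mul,
    one_mul, zero_mul] at h
  simpa only [sum_filter, mul_comm] using h

end Spectral

theorem cayley_zmod_edgeTransitive_block_general (p : ℕ) (hp : p.Prime)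
    (S : Set (ZMod p)) (hSsym : ∀ s ∈ S, -s ∈ S) (hS0 : (0 : ZMod p) ∉ S)
    (hedge : ∀ e ∈ (cayleyGraph S).edgeSet, ∀ f ∈ (cayleyGraph S).edgeSet,
      ∃ φ : cayleyGraph S ≃g cayleyGraph S, Sym2.map (⇑φ) e = f) :
    ∀ k : (ZMod p)ˣ,
      (fun s => (k : ZMod p) * s) '' S = S ∨
        ((fun s => (k : ZMod p) * s) '' S) ∩ S = ∅ := by
  classical
  have : Fact p.Prime := ⟨hp⟩
  intro k
  refine or_iff_not_imp_right.2 fun hdisj => ?_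
  obtain ⟨_, ⟨s, hs, rfl⟩, hks : (k : ZMod p) * s ∈ S⟩ :=
    Set.nonempty_iff_ne_empty.2 hdisj
  have hs0 : s ≠ 0 := ne_of_mem_of_not_mem hs hS0
  obtain ⟨φ, hφ0, hφs⟩ := cayleyGraph_exists_iso_map_zero_map_eq hSsym hS0 hedge hs hks
  obtain ⟨ζ, hζ⟩ : ∃ ζ : ℂ, IsPrimitiveRoot ζ p :=
    ⟨_, Complex.isPrimitiveRoot_exp p hp.ne_zero⟩
  set ψ := AddChar.zmodChar p hζ.pow_eq_one
  set H := univ.filter fun a => cayleyEigenvalue ψ S a = cayleyEigenvalue ψ S 1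
  have hH : H.image (k * s * ·) = H.image (s * ·) := by
    refine hζ.image_mul_left_eq_of_sum_eq (mul_ne_zero k.ne_zero hs0) hs0 Iff.rfl ?_
    rw [← hφs]
    exact sum_cayleyEigenvalue_fiber_apply_iso_eq hSsym hS0
      (AddChar.zmodChar_primitive_of_primitive_root p hζ) hφ0 1 s
  obtain ⟨a, ha, has⟩ : ∃ a ∈ H, s * a = k * s * 1 :=
    mem_image.1 (hH ▸ mem_image_of_mem _ (by simp [H]))
  obtain rfl : a = k := by rwa [mul_one, mul_comm _ s, mul_right_inj' hs0] at has
  have hkS : S.toFinset.image ((k : ZMod p) * ·) = S.toFinset.image (1 * ·) :=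
    hζ.image_mul_left_eq_of_sum_eq k.ne_zero one_ne_zero Iff.rfl (mem_filter.1 ha).2
  simpa using congrArg ((↑) : Finset (ZMod p) → Set (ZMod p)) hkS

/-- For a connected, edge-transitive Cayley graph on `ℤ/p` (`p` prime), the
connection set `S` satisfies: for every unit `k`, either `kS = S` or
`kS ∩ S = ∅`. -/
theorem cayley_zmod_edgeTransitive_block (p : ℕ) (hp : p.Prime)
    (S : Set (ZMod p)) (hSsym : ∀ s ∈ S, -s ∈ S) (hS0 : (0 : ZMod p) ∉ S)
    (hconn : (cayleyGraph S).Connected)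
    (hedge : ∀ e ∈ (cayleyGraph S).edgeSet, ∀ f ∈ (cayleyGraph S).edgeSet,
      ∃ φ : cayleyGraph S ≃g cayleyGraph S, Sym2.map (⇑φ) e = f) :
    ∀ k : (ZMod p)ˣ,
      (fun s => (k : ZMod p) * s) '' S = S ∨
        ((fun s => (k : ZMod p) * s) '' S) ∩ S = ∅ :=
  cayley_zmod_edgeTransitive_block_general p hp S hSsym hS0 hedge
end

section
/- Let G be a finite abelian group of odd order, let S be a symmetric subset of G with 0 ∉ S, and let X = Cay(G;S). Identify the canonical bipartite double cover BX with the Cayley graph Cay(G × ℤ₂; S × {1}), i.e., (v,i) is adjacent to (w,j) if and only if i ≠ j and v − w ∈ S. If φ is an automorphism of BX with φ(G × {0}) = G × {0}, then the map ψ: G → G defined by φ(v,0) = (ψ(v),0) is an automorphism of X. -/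
/-!
Count walks modulo 2. The adjacency matrix of `Cay(H; T)` over `ZMod 2` is the circulant of
the indicator of `T`, a sum of pairwise commuting translation matrices, so by the Frobenius
identity its `2 ^ j`-th power is the circulant of `x ↦ #{t ∈ T | 2 ^ j • t = x}`. Since `|G|` is
odd we may take `2 ^ j ≡ 1 (mod |G|)` with `j > 0`; then `2 ^ j • (s, 1) = (s, 0)`, so the number
of walks of length `2 ^ j` from `(v, 0)` to `(w, 0)` in `Cay(G × ℤ₂; S × {1})` is odd exactly when
`v - w ∈ S`. Automorphisms preserve walk counts, hence the restriction to the layer `G × {0}`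
preserves `v - w ∈ S`.
-/

open Matrix Finset

theorem Finset.sum_pow_expChar_pow_of_commute {ι R : Type*} [Semiring R] (p n : ℕ) [ExpChar R p]
    (s : Finset ι) (f : ι → R) (hf : ∀ i j, Commute (f i) (f j)) :
    (∑ i ∈ s, f i) ^ p ^ n = ∑ i ∈ s, f i ^ p ^ n := by
  classical
  induction s using Finset.induction_on with
  | empty => simp [zero_pow (expChar_pow_pos R p n).ne']
  | insert a s ha ih =>
    rw [Finset.sum_insert ha, Finset.sum_insert ha, ← ih,
      add_pow_expChar_pow_of_commute p n (Commute.sum_right _ _ _ fun i _ => hf a i)]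

namespace Matrix

variable {H R : Type*} [AddCommGroup H] [CommSemiring R]

theorem circulant_sum {ι : Type*} (s : Finset ι) (v : ι → H → R) :
    circulant (∑ i ∈ s, v i) = ∑ i ∈ s, circulant (v i) := by
  ext x y
  simp [circulant_apply, Matrix.sum_apply]

theorem circulant_single_one_mul [Fintype H] [DecidableEq H] (a b : H) :
    circulant (Pi.single a (1 : R)) * circulant (Pi.single b 1) =
      circulant (Pi.single (a + b) 1) := by
  rw [circulant_mul]
  congr 1
  ext x
  simp [mulVec, dotProduct, circulant_apply, Pi.single_apply, sub_eq_iff_eq_add]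

theorem circulant_single_one_pow [Fintype H] [DecidableEq H] (a : H) (n : ℕ) :
    circulant (Pi.single a (1 : R)) ^ n = circulant (Pi.single (n • a) 1) := by
  induction n with
  | zero => simp
  | succ n ih => rw [pow_succ, ih, circulant_single_one_mul, succ_nsmul]

theorem circulant_indicator_pow_char_pow [Fintype H] [DecidableEq H] (p n : ℕ) [Fact p.Prime]
    [CharP R p] (T : Set H) [DecidablePred (· ∈ T)] :
    circulant (fun x => if x ∈ T then (1 : R) else 0) ^ p ^ n =
      circulant (fun x => (#{a | a ∈ T ∧ p ^ n • a = x} : R)) := by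
  have hT : (fun x => if x ∈ T then (1 : R) else 0) = ∑ a ∈ {a | a ∈ T}, Pi.single a 1 := by
    ext x
    simp [Finset.sum_apply, Pi.single_apply]
  have hcount : (fun x => (#{a | a ∈ T ∧ p ^ n • a = x} : R)) =
      ∑ a ∈ {a | a ∈ T}, Pi.single (p ^ n • a) 1 := by
    ext x
    simp [Finset.sum_apply, Pi.single_apply, Finset.filter_filter, eq_comm]
  have hcomm (a b : H) : Commute (circulant (Pi.single a (1 : R))) (circulant (Pi.single b 1)) :=
    circulant_mul_comm _ _
  rw [hT, hcount, circulant_sum, circulant_sum, sum_pow_expChar_pow_of_commute p n _ _ hcomm]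
  simp_rw [circulant_single_one_pow]

end Matrix

theorem SimpleGraph.Iso.adjMatrix_pow_apply {V W R : Type*} [Fintype V] [Fintype W]
    [DecidableEq V] [DecidableEq W] [Semiring R] {G : SimpleGraph V} {G' : SimpleGraph W}
    [DecidableRel G.Adj] [DecidableRel G'.Adj] (φ : G ≃g G') (k : ℕ) (x y : V) :
    (G'.adjMatrix R ^ k) (φ x) (φ y) = (G.adjMatrix R ^ k) x y := by
  rw [← φ.reindex_adjMatrix (α := R), ← coe_reindexRingEquiv, ← map_pow]
  simp

section Cayley

variable {H : Type*} [AddCommGroup H] {T : Set H}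

theorem cayleyGraph_adj_iff_s9 (hT : ∀ t ∈ T, -t ∈ T) (hT0 : (0 : H) ∉ T) {x y : H} :
    (cayleyGraph T).Adj x y ↔ x - y ∈ T := by
  refine ⟨fun h => h.2.1, fun h => ⟨?_, h, by simpa using hT _ h⟩⟩
  rintro rfl
  exact hT0 (by simpa using h)

theorem adjMatrix_cayleyGraph (R : Type*) [Zero R] [One R] [DecidableRel (cayleyGraph T).Adj]
    [DecidablePred (· ∈ T)] (hT : ∀ t ∈ T, -t ∈ T) (hT0 : (0 : H) ∉ T) :
    (cayleyGraph T).adjMatrix R = circulant (fun x => if x ∈ T then 1 else 0) := by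
  ext x y
  simp only [SimpleGraph.adjMatrix_apply, circulant_apply, cayleyGraph_adj_iff_s9 hT hT0]

end Cayley

theorem exists_two_pow_nsmul_eq_self {G : Type*} [AddGroup G] [Fintype G]
    (hodd : Odd (Fintype.card G)) : ∃ j, 0 < j ∧ ∀ g : G, 2 ^ j • g = g := by
  refine ⟨Nat.totient (Fintype.card G), Nat.totient_pos.mpr Fintype.card_pos, fun g => ?_⟩
  have h : 2 ^ Nat.totient (Fintype.card G) ≡ 1 [MOD Fintype.card G] :=
    Nat.ModEq.pow_totient (Nat.coprime_two_left.mpr hodd)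
  rw [← mod_card_nsmul, h, mod_card_nsmul, one_nsmul]

theorem adjMatrix_cayleyGraph_prod_pow_apply {G : Type*} [AddCommGroup G] [Fintype G]
    [DecidableEq G] (S : Set G) [DecidablePred (· ∈ S)] (hS : ∀ s ∈ S, -s ∈ S)
    [DecidableRel (cayleyGraph (S ×ˢ {(1 : ZMod 2)})).Adj]
    {j : ℕ} (hj : 0 < j) (h2j : ∀ g : G, 2 ^ j • g = g) (v w : G) :
    ((cayleyGraph (S ×ˢ {(1 : ZMod 2)})).adjMatrix (ZMod 2) ^ 2 ^ j) (v, 0) (w, 0) =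
      if v - w ∈ S then 1 else 0 := by
  classical
  have hT : ∀ t ∈ S ×ˢ {(1 : ZMod 2)}, -t ∈ S ×ˢ {(1 : ZMod 2)} :=
    fun t ⟨hs, h1⟩ => ⟨hS _ hs, by simp_all⟩
  have hT0 : (0 : G × ZMod 2) ∉ S ×ˢ {(1 : ZMod 2)} := fun h => by simpa using h.2
  have htwo (b : ZMod 2) : 2 ^ j • b = 0 := by
    simp [nsmul_eq_mul, hj.ne', show (2 : ZMod 2) = 0 from rfl]
  rw [adjMatrix_cayleyGraph _ hT hT0, circulant_indicator_pow_char_pow 2 j, circulant_apply]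
  have hfilter : ({a | a ∈ S ×ˢ {1} ∧ 2 ^ j • a = (v, 0) - (w, 0)} : Finset (G × ZMod 2)) =
      if v - w ∈ S then {(v - w, 1)} else ∅ := by
    ext ⟨a, b⟩
    simp only [Finset.mem_filter, Finset.mem_univ, true_and, Set.mem_prod, Set.mem_singleton_iff,
      Prod.smul_mk, h2j, htwo, Prod.mk_sub_mk, sub_zero, Prod.mk.injEq, and_true]
    split_ifs <;> grind
  rw [hfilter]
  split_ifs <;> simp

theorem doubleCover_aut_restrict_layer_general {G : Type*} [AddCommGroup G] [Fintype G]
    (hodd : Odd (Fintype.card G))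
    (S : Set G) (hSsym : ∀ s ∈ S, -s ∈ S)
    (φ : cayleyGraph (S ×ˢ {(1 : ZMod 2)}) ≃g cayleyGraph (S ×ˢ {(1 : ZMod 2)}))
    (hφ : (fun a => φ a) '' ((Set.univ : Set G) ×ˢ {(0 : ZMod 2)}) =
      (Set.univ : Set G) ×ˢ {(0 : ZMod 2)}) :
    ∃ ψ : cayleyGraph S ≃g cayleyGraph S,
      ∀ v : G, φ (v, (0 : ZMod 2)) = (ψ v, (0 : ZMod 2)) := by
  classical
  obtain ⟨j, hj, h2j⟩ := exists_two_pow_nsmul_eq_self hodd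
  set ψ : G → G := fun v => (φ (v, 0)).1
  have hψ (v : G) : φ (v, 0) = (ψ v, 0) := by
    have hv : φ (v, 0) ∈ (Set.univ : Set G) ×ˢ {(0 : ZMod 2)} :=
      hφ ▸ Set.mem_image_of_mem _ ⟨trivial, rfl⟩
    exact Prod.ext rfl hv.2
  have hinj : Function.Injective ψ := fun a b hab =>
    congrArg Prod.fst (φ.injective ((hψ a).trans (by rw [hab, hψ b])))
  have hsub (v w : G) : ψ v - ψ w ∈ S ↔ v - w ∈ S := by
    have h := φ.adjMatrix_pow_apply (R := ZMod 2) (2 ^ j) (v, 0) (w, 0)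
    rw [hψ, hψ, adjMatrix_cayleyGraph_prod_pow_apply S hSsym hj h2j,
      adjMatrix_cayleyGraph_prod_pow_apply S hSsym hj h2j] at h
    by_cases hv : v - w ∈ S <;> by_cases hw : ψ v - ψ w ∈ S <;> simp_all
  refine ⟨⟨Equiv.ofBijective ψ (Finite.injective_iff_bijective.mp hinj), ?_⟩, hψ⟩
  intro a b
  simp only [cayleyGraph, Equiv.ofBijective_apply, hinj.ne_iff, hsub]

/-- Realizing `BX` as `Cay(G × ℤ₂; S × {1})`: if an automorphism `φ` of `BX`
preserves the layer `G × {0}`, then its restriction to that layer is an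
automorphism of `X = Cay(G;S)`. -/
theorem doubleCover_aut_restrict_layer {G : Type*} [AddCommGroup G] [Fintype G]
    (hodd : Odd (Fintype.card G))
    (S : Set G) (hSsym : ∀ s ∈ S, -s ∈ S) (hS0 : (0 : G) ∉ S)
    (φ : cayleyGraph (S ×ˢ {(1 : ZMod 2)}) ≃g cayleyGraph (S ×ˢ {(1 : ZMod 2)}))
    (hφ : (fun a => φ a) '' ((Set.univ : Set G) ×ˢ {(0 : ZMod 2)}) =
      (Set.univ : Set G) ×ˢ {(0 : ZMod 2)}) :
    ∃ ψ : cayleyGraph S ≃g cayleyGraph S,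
      ∀ v : G, φ (v, (0 : ZMod 2)) = (ψ v, (0 : ZMod 2)) :=
  doubleCover_aut_restrict_layer_general hodd S hSsym φ hφ
end
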